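/- Let t ≥ 0 and let V = (ξ⁻, ξ⁺) be a connected component of the superlevel set A_t = { x ∈ ℝ : B(x) > t }. Then ξ⁻ and ξ⁺ are finite irrational numbers and B(ξ⁻) = B(ξ⁺) = t. -/

import Mathlib

open scoped ENNReal Topology

noncomputable def gaussIter (x : ℝ) : ℕ → ℝ
  | 0 => Int.fract x
  | n + 1 => Int.fract (gaussIter x n)⁻¹

noncomputable def pquot (x : ℝ) : ℕ → ℤ
  | 0 => ⌊x⌋
  | n + 1 => ⌊(gaussIter x n)⁻¹⌋

noncomputable def qden (x : ℝ) : ℕ → ℤ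
  | 0 => 1
  | 1 => pquot x 1
  | n + 2 => pquot x (n + 2) * qden x (n + 1) + qden x n

noncomputable def pnum (x : ℝ) : ℕ → ℤ
  | 0 => pquot x 0
  | 1 => pquot x 1 * pquot x 0 + 1
  | n + 2 => pquot x (n + 2) * pnum x (n + 1) + pnum x n

noncomputable def brjunoTerm (x : ℝ) (k : ℕ) : ℝ :=
  Real.log (pquot x (k + 1)) / (qden x k : ℝ)

open Classical in
noncomputable def brjuno (x : ℝ) : ℝ≥0∞ :=
  if Irrational x then ∑' k, ENNReal.ofReal (brjunoTerm x k) else ⊤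

noncomputable def brjunoTailE (x : ℝ) (n : ℕ) : ℝ≥0∞ :=
  ∑' k, ENNReal.ofReal (brjunoTerm x (n + k))

noncomputable def cfLen (x : ℝ) : ℕ := sInf {n | gaussIter x n = 0}

noncomputable def brjunoFinite (x : ℝ) : ℝ :=
  ∑ k ∈ Finset.range (cfLen x), Real.log (pquot x (k + 1)) / (qden x k : ℝ)

def brjunoSuper (t : ℝ) : Set ℝ := {x | ENNReal.ofReal t < brjuno x}

def IsCompOf (A : Set ℝ) (a b : ℝ) : Prop := ∃ x ∈ A, connectedComponentIn A x = Set.Ioo a b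

def diamond (κ a b : ℝ) : Set ℂ :=
  {z : ℂ | a < z.re ∧ z.re < b ∧ |z.im| ≤ κ * min (z.re - a) (b - z.re)}

noncomputable def CMset (κ M : ℝ) : Set ℂ :=
  (fun ξ : ℂ => Complex.exp (2 * Real.pi * Complex.I * ξ)) ''
    (⋃ (a : ℝ) (b : ℝ) (_ : IsCompOf (brjunoSuper M) a b), diamond κ a b)ᶜ ∪ {0}

/-!
By maximality of the component its endpoints lie outside `A_t`, so `B ≤ t < ∞` there, which
forces them to be irrational. If `B(ξ) < t` at an endpoint `ξ`, we find points of the component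
with `B < t`.
Keep the first `n + 2` partial quotients of `ξ`, raise the next one `a` to `a + 1` and continue with
the golden tail `1, 1, 1, …`. The resulting `y` lies within `1 / (n + 1)` of `ξ`, on the side fixed
by the parity of `n`, and its Brjuno series differs from that of `ξ` only by
`log (a + 1) / q ≤ log a / q + log 2 / (n + 1)` followed by vanishing terms `log 1 / qₖ`.
-/

open Set Filter
open scoped goldenRatio

section GaussMap

theorem Irrational.fract {x : ℝ} (hx : Irrational x) : Irrational (Int.fract x) := by
  rw [← Int.self_sub_floor]
  exact hx.sub_intCast ⌊x⌋

theorem irrational_gaussIter {x : ℝ} (hx : Irrational x) : ∀ n, Irrational (gaussIter x n)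
  | 0 => hx.fract
  | n + 1 => (irrational_gaussIter hx n).inv.fract

theorem gaussIter_nonneg (x : ℝ) : ∀ n, 0 ≤ gaussIter x n
  | 0 => Int.fract_nonneg _
  | _ + 1 => Int.fract_nonneg _

theorem gaussIter_lt_one (x : ℝ) : ∀ n, gaussIter x n < 1
  | 0 => Int.fract_lt_one _
  | _ + 1 => Int.fract_lt_one _

theorem gaussIter_pos {x : ℝ} (hx : Irrational x) (n : ℕ) : 0 < gaussIter x n :=
  (gaussIter_nonneg x n).lt_of_ne (irrational_gaussIter hx n).ne_zero.symm

theorem inv_gaussIter (x : ℝ) (n : ℕ) :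
    (gaussIter x n)⁻¹ = pquot x (n + 1) + gaussIter x (n + 1) :=
  (Int.floor_add_fract _).symm

theorem one_le_pquot_succ {x : ℝ} (hx : Irrational x) (n : ℕ) : 1 ≤ pquot x (n + 1) :=
  Int.le_floor.mpr <| by
    simpa using (one_le_inv₀ (gaussIter_pos hx n)).mpr (gaussIter_lt_one x n).le

theorem gaussIter_succ' (x : ℝ) : ∀ n, gaussIter x (n + 1) = gaussIter (Int.fract x)⁻¹ n
  | 0 => rfl
  | n + 1 => congrArg (fun g => Int.fract g⁻¹) (gaussIter_succ' x n)

theorem pquot_succ' (x : ℝ) : ∀ n, pquot x (n + 1) = pquot (Int.fract x)⁻¹ n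
  | 0 => rfl
  | n + 1 => congrArg (fun g => ⌊g⁻¹⌋) (gaussIter_succ' x n)

theorem floor_intCast_add_of_mem_Ico {m : ℤ} {v : ℝ} (hv : v ∈ Ico 0 1) :
    ⌊(m : ℝ) + v⌋ = m := by
  rw [Int.floor_intCast_add, Int.floor_eq_zero_iff.mpr hv, add_zero]

theorem fract_intCast_add_of_mem_Ico {m : ℤ} {v : ℝ} (hv : v ∈ Ico 0 1) :
    Int.fract ((m : ℝ) + v) = v := by
  rw [Int.fract_intCast_add, Int.fract_eq_self.mpr hv]

theorem exists_pquot_eq_gaussIter_eq {g : ℝ} (hg : Irrational g) (hg0 : 0 < g) (hg1 : g < 1) :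
    ∀ (n : ℕ) {x : ℝ}, Irrational x →
      ∃ y, Irrational y ∧ (∀ k ≤ n, pquot y k = pquot x k) ∧ gaussIter y n = g
  | 0, x, _ => by
    refine ⟨⌊x⌋ + g, hg.intCast_add _, fun k hk => ?_, fract_intCast_add_of_mem_Ico ⟨hg0.le, hg1⟩⟩
    obtain rfl : k = 0 := Nat.le_zero.mp hk
    exact floor_intCast_add_of_mem_Ico ⟨hg0.le, hg1⟩
  | n + 1, x, hx => by
    obtain ⟨u, hu, hdigits, hgauss⟩ := exists_pquot_eq_gaussIter_eq hg hg0 hg1 n hx.fract.inv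
    have hu1 : 1 < u := by
      have h : (1 : ℤ) ≤ ⌊u⌋ := (one_le_pquot_succ hx 0).trans_eq (hdigits 0 n.zero_le).symm
      exact lt_of_le_of_ne (by simpa using Int.le_floor.mp h) (by simpa using (hu.ne_int 1).symm)
    have hv : u⁻¹ ∈ Ico 0 1 := ⟨inv_nonneg.mpr (zero_le_one.trans hu1.le), inv_lt_one_of_one_lt₀ hu1⟩
    have hfract : (Int.fract ((⌊x⌋ : ℝ) + u⁻¹))⁻¹ = u := by
      rw [fract_intCast_add_of_mem_Ico hv, inv_inv]
    refine ⟨⌊x⌋ + u⁻¹, hu.inv.intCast_add _, fun k hk => ?_, by rw [gaussIter_succ', hfract, hgauss]⟩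
    cases k with
    | zero => exact floor_intCast_add_of_mem_Ico hv
    | succ k => rw [pquot_succ', hfract, hdigits k (by omega), ← pquot_succ']

end GaussMap

section Convergents

theorem pnum_mul_qden_succ_sub (x : ℝ) :
    ∀ n, pnum x n * qden x (n + 1) - pnum x (n + 1) * qden x n = (-1) ^ (n + 1)
  | 0 => by simp only [pnum, qden]; ring
  | n + 1 => by
    have ih := pnum_mul_qden_succ_sub x n
    simp only [pnum, qden]
    linear_combination -ih

theorem one_le_qden {x : ℝ} (hx : Irrational x) : ∀ n, 1 ≤ qden x n
  | 0 => le_rfl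
  | 1 => one_le_pquot_succ hx 0
  | n + 2 => by
    rw [qden]
    nlinarith [one_le_pquot_succ hx (n + 1), one_le_qden hx (n + 1), one_le_qden hx n]

theorem le_qden {x : ℝ} (hx : Irrational x) : ∀ n : ℕ, (n : ℤ) ≤ qden x n
  | 0 => zero_le_one
  | 1 => one_le_pquot_succ hx 0
  | n + 2 => by
    have ih : (n : ℤ) + 1 ≤ qden x (n + 1) := by exact_mod_cast le_qden hx (n + 1)
    rw [qden]
    push_cast
    nlinarith [one_le_pquot_succ hx (n + 1), one_le_qden hx n, one_le_qden hx (n + 1)]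

theorem qden_eq_and_pnum_eq_of_pquot_eq {x y : ℝ} {n : ℕ} (h : ∀ k ≤ n, pquot x k = pquot y k) :
    ∀ k ≤ n, qden x k = qden y k ∧ pnum x k = pnum y k
  | 0, _ => by simp [qden, pnum, h 0 n.zero_le]
  | 1, hk => by simp [qden, pnum, h 0 n.zero_le, h 1 hk]
  | k + 2, hk => by
    obtain ⟨hq1, hp1⟩ := qden_eq_and_pnum_eq_of_pquot_eq h (k + 1) (by omega)
    obtain ⟨hq0, hp0⟩ := qden_eq_and_pnum_eq_of_pquot_eq h k (by omega)
    simp [qden, pnum, h (k + 2) hk, hq1, hp1, hq0, hp0]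

end Convergents

section Approximation

/-- The denominator of the Möbius map `g ↦ (pₙ₊₁ + pₙ g) / (qₙ₊₁ + qₙ g)`, which sends the
`(n + 1)`-st Gauss iterate of `x` back to `x`. -/
noncomputable def cfDenom (x : ℝ) (n : ℕ) (g : ℝ) : ℝ := qden x (n + 1) + qden x n * g

variable {x y : ℝ} {n : ℕ}

theorem mul_cfDenom_gaussIter (hx : Irrational x) : ∀ n,
    x * cfDenom x n (gaussIter x (n + 1)) = pnum x (n + 1) + pnum x n * gaussIter x (n + 1)
  | 0 => by
    have hx0 : x = pquot x 0 + gaussIter x 0 := (Int.floor_add_fract x).symm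
    have h1 := inv_gaussIter x 0
    have h0 := (gaussIter_pos hx 0).ne'
    simp only [cfDenom, pnum, qden, Int.cast_one, one_mul, Int.cast_add, Int.cast_mul]
    rw [← sub_eq_iff_eq_add.mpr h1]
    linear_combination (gaussIter x 0)⁻¹ * hx0 + mul_inv_cancel₀ h0
  | n + 1 => by
    have ih := mul_cfDenom_gaussIter hx n
    have h1 := inv_gaussIter x (n + 1)
    have h0 := (gaussIter_pos hx (n + 1)).ne'
    simp only [cfDenom, pnum, qden, Int.cast_add, Int.cast_mul] at ih ⊢
    rw [← sub_eq_iff_eq_add.mpr h1]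
    field_simp
    linear_combination ih

theorem add_one_le_cfDenom (hx : Irrational x) {g : ℝ} (hg : 0 ≤ g) :
    (n : ℝ) + 1 ≤ cfDenom x n g := by
  have hq₀ : (0 : ℝ) ≤ qden x n := by exact_mod_cast (one_le_qden hx n).trans' zero_le_one
  have hq₁ : (n : ℝ) + 1 ≤ qden x (n + 1) := by exact_mod_cast le_qden hx (n + 1)
  unfold cfDenom
  nlinarith [mul_nonneg hq₀ hg]

theorem cfDenom_pos (hx : Irrational x) {g : ℝ} (hg : 0 ≤ g) : 0 < cfDenom x n g :=
  (add_one_le_cfDenom hx hg).trans_lt' n.cast_add_one_pos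

theorem neg_one_pow_mul_sub_eq (hx : Irrational x) (hy : Irrational y)
    (h : ∀ k ≤ n + 1, pquot x k = pquot y k) :
    (-1) ^ n * (y - x) = (gaussIter x (n + 1) - gaussIter y (n + 1)) /
      (cfDenom x n (gaussIter x (n + 1)) * cfDenom x n (gaussIter y (n + 1))) := by
  obtain ⟨hq₁, hp₁⟩ := qden_eq_and_pnum_eq_of_pquot_eq h (n + 1) le_rfl
  obtain ⟨hq₀, hp₀⟩ := qden_eq_and_pnum_eq_of_pquot_eq h n n.le_succ
  have hxid := mul_cfDenom_gaussIter hx n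
  have hyid := mul_cfDenom_gaussIter hy n
  have hdet : (pnum x n * qden x (n + 1) - pnum x (n + 1) * qden x n : ℝ) = (-1) ^ (n + 1) := by
    exact_mod_cast pnum_mul_qden_succ_sub x n
  have hsq : ((-1 : ℝ) ^ n) * (-1) ^ n = 1 := by rw [← mul_pow]; norm_num
  rw [eq_div_iff (mul_pos (cfDenom_pos hx (gaussIter_nonneg x _))
    (cfDenom_pos hx (gaussIter_nonneg y _))).ne']
  simp only [cfDenom, ← hq₁, ← hq₀, ← hp₁, ← hp₀] at hxid hyid ⊢
  linear_combination (-1) ^ n * (qden x (n + 1) + qden x n * gaussIter x (n + 1)) * hyid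
    - (-1) ^ n * (qden x (n + 1) + qden x n * gaussIter y (n + 1)) * hxid
    - (-1) ^ n * (gaussIter x (n + 1) - gaussIter y (n + 1)) * hdet
    + (gaussIter x (n + 1) - gaussIter y (n + 1)) * hsq

theorem neg_one_pow_mul_sub_pos_and_abs_sub_le (hx : Irrational x) (hy : Irrational y)
    (h : ∀ k ≤ n + 1, pquot x k = pquot y k) (hlt : gaussIter y (n + 1) < gaussIter x (n + 1)) :
    0 < (-1) ^ n * (y - x) ∧ |y - x| ≤ 1 / (n + 1) := by
  have hD₁ := add_one_le_cfDenom (n := n) hx (gaussIter_nonneg x (n + 1))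
  have hD₂ := add_one_le_cfDenom (n := n) hx (gaussIter_nonneg y (n + 1))
  have hD : (n : ℝ) + 1 ≤ cfDenom x n (gaussIter x (n + 1)) * cfDenom x n (gaussIter y (n + 1)) :=
    by nlinarith
  have hpos : 0 < (-1) ^ n * (y - x) := by
    rw [neg_one_pow_mul_sub_eq hx hy h]
    exact div_pos (sub_pos.mpr hlt) (hD.trans_lt' n.cast_add_one_pos)
  refine ⟨hpos, ?_⟩
  have habs : |y - x| = (-1) ^ n * (y - x) := by
    rw [← abs_of_pos hpos, abs_mul]
    simp
  rw [habs, neg_one_pow_mul_sub_eq hx hy h]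
  exact div_le_div₀ zero_le_one (by linarith [gaussIter_lt_one x (n + 1), gaussIter_pos hy (n + 1)])
    n.cast_add_one_pos hD

end Approximation

section GoldenTail

theorem inv_goldenRatio_mem_Ico : φ⁻¹ ∈ Ico (0 : ℝ) 1 :=
  ⟨(inv_pos.mpr Real.goldenRatio_pos).le, inv_lt_one_of_one_lt₀ Real.one_lt_goldenRatio⟩

theorem goldenRatio_eq_one_add_inv : φ = ((1 : ℤ) : ℝ) + φ⁻¹ := by
  rw [Real.inv_goldenRatio, ← Real.one_sub_goldenConj]
  push_cast
  ring

theorem floor_goldenRatio : ⌊φ⌋ = 1 := by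
  conv_lhs => rw [goldenRatio_eq_one_add_inv]
  exact floor_intCast_add_of_mem_Ico inv_goldenRatio_mem_Ico

theorem fract_goldenRatio : Int.fract φ = φ⁻¹ := by
  conv_lhs => rw [goldenRatio_eq_one_add_inv]
  exact fract_intCast_add_of_mem_Ico inv_goldenRatio_mem_Ico

variable {y : ℝ} {m : ℕ}

theorem gaussIter_add_of_eq_inv_goldenRatio (h : gaussIter y m = φ⁻¹) :
    ∀ j, gaussIter y (m + j) = φ⁻¹
  | 0 => h
  | j + 1 => by
    change Int.fract (gaussIter y (m + j))⁻¹ = φ⁻¹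
    rw [gaussIter_add_of_eq_inv_goldenRatio h j, inv_inv, fract_goldenRatio]

theorem pquot_add_of_eq_inv_goldenRatio (h : gaussIter y m = φ⁻¹) (j : ℕ) :
    pquot y (m + j + 1) = 1 := by
  change ⌊(gaussIter y (m + j))⁻¹⌋ = 1
  rw [gaussIter_add_of_eq_inv_goldenRatio h j, inv_inv, floor_goldenRatio]

end GoldenTail

section BrjunoBound

open Finset

theorem brjuno_eq_sum_of_pquot_eq_one {y : ℝ} (hy : Irrational y) {m : ℕ}
    (h : ∀ j, pquot y (m + j + 1) = 1) :
    brjuno y = ∑ k ∈ range m, ENNReal.ofReal (brjunoTerm y k) := by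
  rw [brjuno, if_pos hy]
  refine tsum_eq_sum fun k hk => ?_
  obtain ⟨j, rfl⟩ := Nat.exists_eq_add_of_le (not_lt.mp (mem_range.not.mp hk))
  simp [brjunoTerm, h j]

theorem log_add_one_div_le {a q c : ℝ} (ha : 1 ≤ a) (hc : 0 < c) (hcq : c ≤ q) :
    Real.log (a + 1) / q ≤ Real.log a / q + Real.log 2 / c := by
  have hlog : Real.log (a + 1) ≤ Real.log a + Real.log 2 := by
    rw [← Real.log_mul (by positivity) two_ne_zero]
    exact Real.log_le_log (by positivity) (by linarith)
  calc Real.log (a + 1) / q ≤ (Real.log a + Real.log 2) / q :=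
        div_le_div_of_nonneg_right hlog (hc.le.trans hcq)
    _ = Real.log a / q + Real.log 2 / q := add_div _ _ _
    _ ≤ Real.log a / q + Real.log 2 / c := by gcongr

theorem brjuno_le_of_pquot_eq {ξ y : ℝ} (hξ : Irrational ξ) (hy : Irrational y) {n : ℕ}
    (hlow : ∀ k ≤ n + 1, pquot y k = pquot ξ k) (hnext : pquot y (n + 2) = pquot ξ (n + 2) + 1)
    (htail : ∀ j, pquot y (n + 2 + j + 1) = 1) :
    brjuno y ≤ brjuno ξ + ENNReal.ofReal (Real.log 2 / (n + 1)) := by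
  have hq : ∀ k ≤ n + 1, qden y k = qden ξ k :=
    fun k hk => (qden_eq_and_pnum_eq_of_pquot_eq hlow k hk).1
  have hterm : ∀ k ∈ range (n + 1), brjunoTerm y k = brjunoTerm ξ k := by
    intro k hk
    have hkn : k ≤ n := Nat.lt_succ_iff.mp (mem_range.mp hk)
    simp only [brjunoTerm, hlow (k + 1) (by omega), hq k (by omega)]
  have hlast : ENNReal.ofReal (brjunoTerm y (n + 1)) ≤
      ENNReal.ofReal (brjunoTerm ξ (n + 1)) + ENNReal.ofReal (Real.log 2 / (n + 1)) := by
    refine (ENNReal.ofReal_le_ofReal ?_).trans ENNReal.ofReal_add_le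
    simp only [brjunoTerm, hnext, hq (n + 1) le_rfl]
    push_cast
    exact log_add_one_div_le (by exact_mod_cast one_le_pquot_succ hξ (n + 1)) n.cast_add_one_pos
      (by exact_mod_cast le_qden hξ (n + 1))
  calc brjuno y = ∑ k ∈ range (n + 2), ENNReal.ofReal (brjunoTerm y k) :=
        brjuno_eq_sum_of_pquot_eq_one hy htail
    _ = ∑ k ∈ range (n + 1), ENNReal.ofReal (brjunoTerm ξ k) +
          ENNReal.ofReal (brjunoTerm y (n + 1)) := by
        rw [sum_range_succ, sum_congr rfl fun k hk => by rw [hterm k hk]]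
    _ ≤ ∑ k ∈ range (n + 2), ENNReal.ofReal (brjunoTerm ξ k) +
          ENNReal.ofReal (Real.log 2 / (n + 1)) := by
        rw [sum_range_succ _ (n + 1), add_assoc]
        gcongr
    _ ≤ brjuno ξ + ENNReal.ofReal (Real.log 2 / (n + 1)) := by
        rw [brjuno, if_pos hξ]
        gcongr
        exact ENNReal.sum_le_tsum _

end BrjunoBound

theorem exists_neg_one_pow_mul_sub_pos_brjuno_le {ξ : ℝ} (hξ : Irrational ξ) (n : ℕ) :
    ∃ y, 0 < (-1) ^ n * (y - ξ) ∧ |y - ξ| ≤ 1 / (n + 1) ∧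
      brjuno y ≤ brjuno ξ + ENNReal.ofReal (Real.log 2 / (n + 1)) := by
  set a := pquot ξ (n + 2)
  set c : ℝ := ((a + 1 : ℤ) : ℝ) + φ⁻¹
  have hc : 1 < c := by
    have : (1 : ℝ) ≤ a := by exact_mod_cast one_le_pquot_succ hξ (n + 1)
    have := inv_goldenRatio_mem_Ico.1
    push_cast [c]
    linarith
  obtain ⟨y, hy, hlow, hgy⟩ := exists_pquot_eq_gaussIter_eq
    (Real.goldenRatio_irrational.inv.intCast_add _).inv (inv_pos.mpr (zero_lt_one.trans hc))
    (inv_lt_one_of_one_lt₀ hc) (n + 1) hξ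
  have hnext : pquot y (n + 2) = a + 1 := by
    change ⌊(gaussIter y (n + 1))⁻¹⌋ = _
    rw [hgy, inv_inv, floor_intCast_add_of_mem_Ico inv_goldenRatio_mem_Ico]
  have hgold : gaussIter y (n + 2) = φ⁻¹ := by
    change Int.fract (gaussIter y (n + 1))⁻¹ = _
    rw [hgy, inv_inv, fract_intCast_add_of_mem_Ico inv_goldenRatio_mem_Ico]
  have hlt : gaussIter y (n + 1) < gaussIter ξ (n + 1) := by
    rw [hgy]
    refine inv_lt_of_inv_lt₀ (gaussIter_pos hξ (n + 1)) ?_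
    rw [inv_gaussIter]
    push_cast [c]
    linarith [gaussIter_lt_one ξ (n + 2), inv_goldenRatio_mem_Ico.1]
  obtain ⟨hside, hdist⟩ :=
    neg_one_pow_mul_sub_pos_and_abs_sub_le hξ hy (fun k hk => (hlow k hk).symm) hlt
  exact ⟨y, hside, hdist,
    brjuno_le_of_pquot_eq hξ hy hlow hnext (pquot_add_of_eq_inv_goldenRatio hgold)⟩

theorem exists_neg_one_pow_mul_sub_pos_brjuno_lt {ξ : ℝ} (hξ : Irrational ξ) {c : ℝ≥0∞}
    (hc : brjuno ξ < c) (e : ℕ) {δ : ℝ} (hδ : 0 < δ) :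
    ∃ y, 0 < (-1) ^ e * (y - ξ) ∧ |y - ξ| < δ ∧ brjuno y < c := by
  have hlog : Tendsto (fun n : ℕ => brjuno ξ + ENNReal.ofReal (Real.log 2 / (n + 1))) atTop
      (𝓝 (brjuno ξ)) := by
    simpa [div_eq_mul_inv] using tendsto_const_nhds.add
      (ENNReal.tendsto_ofReal (tendsto_one_div_add_atTop_nhds_zero_nat.const_mul (Real.log 2)))
  obtain ⟨N, hN⟩ := eventually_atTop.mp
    ((hlog.eventually (gt_mem_nhds hc)).and (tendsto_one_div_add_atTop_nhds_zero_nat.eventually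
      (gt_mem_nhds hδ)))
  obtain ⟨y, hside, hdist, hy⟩ := exists_neg_one_pow_mul_sub_pos_brjuno_le hξ (2 * N + e)
  have hN' := hN (2 * N + e) (by omega)
  refine ⟨y, by simpa [pow_add, pow_mul] using hside, hdist.trans_lt hN'.2, hy.trans_lt hN'.1⟩

theorem notMem_of_connectedComponentIn_eq_Ioo {α : Type*} [ConditionallyCompleteLinearOrder α]
    [TopologicalSpace α] [OrderTopology α] [DenselyOrdered α] {A : Set α} {x a b : α}
    (hx : x ∈ A) (h : connectedComponentIn A x = Ioo a b) : a ∉ A ∧ b ∉ A := by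
  have hxab : x ∈ Ioo a b := h ▸ mem_connectedComponentIn hx
  have hsub : Ioo a b ⊆ A := h ▸ connectedComponentIn_subset A x
  have hab : a < b := hxab.1.trans hxab.2
  constructor
  · intro ha
    have hIco : Ico a b ⊆ Ioo a b := h ▸ isPreconnected_Ico.subset_connectedComponentIn
      (Ioo_subset_Ico_self hxab) (Ioo_insert_left hab ▸ insert_subset ha hsub)
    exact lt_irrefl a (hIco (left_mem_Ico.mpr hab)).1
  · intro hb
    have hIoc : Ioc a b ⊆ Ioo a b := h ▸ isPreconnected_Ioc.subset_connectedComponentIn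
      (Ioo_subset_Ioc_self hxab) (Ioo_insert_right hab ▸ insert_subset hb hsub)
    exact lt_irrefl b (hIoc (right_mem_Ioc.mpr hab)).2

theorem irrational_of_brjuno_ne_top {x : ℝ} (h : brjuno x ≠ ⊤) : Irrational x := by
  by_contra hx
  exact h (by rw [brjuno, if_neg hx])

theorem brjuno_eq_of_Ioo_subset_brjunoSuper {t a b ξ : ℝ} (hab : a < b)
    (hsub : Ioo a b ⊆ brjunoSuper t) (hξ : ξ = a ∨ ξ = b) (hle : brjuno ξ ≤ ENNReal.ofReal t) :
    brjuno ξ = ENNReal.ofReal t := by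
  refine hle.antisymm (not_lt.mp fun hlt => ?_)
  obtain ⟨e, hmem⟩ : ∃ e : ℕ, ∀ y, 0 < (-1) ^ e * (y - ξ) → |y - ξ| < b - a → y ∈ Ioo a b := by
    rcases hξ with rfl | rfl
    · exact ⟨0, fun y hy hd => ⟨by simpa using hy, by linarith [(abs_lt.mp hd).2]⟩⟩
    · exact ⟨1, fun y hy hd => ⟨by linarith [(abs_lt.mp hd).1], by simpa using hy⟩⟩
  obtain ⟨y, hside, hdist, hy⟩ := exists_neg_one_pow_mul_sub_pos_brjuno_lt
    (irrational_of_brjuno_ne_top hlt.ne_top) hlt e (sub_pos.mpr hab)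
  exact lt_asymm (hsub (hmem y hside hdist)) hy

theorem statement5_general (t : ℝ) (ξm ξp : ℝ)
    (hcomp : ∃ x ∈ brjunoSuper t,
      connectedComponentIn (brjunoSuper t) x = Set.Ioo ξm ξp) :
    Irrational ξm ∧ Irrational ξp ∧
      brjuno ξm = ENNReal.ofReal t ∧ brjuno ξp = ENNReal.ofReal t := by
  obtain ⟨x, hx, hconn⟩ := hcomp
  have hxab : x ∈ Ioo ξm ξp := hconn ▸ mem_connectedComponentIn hx
  have hsub : Ioo ξm ξp ⊆ brjunoSuper t := hconn ▸ connectedComponentIn_subset _ _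
  obtain ⟨hm, hp⟩ := notMem_of_connectedComponentIn_eq_Ioo hx hconn
  have hm_le : brjuno ξm ≤ ENNReal.ofReal t := not_lt.mp hm
  have hp_le : brjuno ξp ≤ ENNReal.ofReal t := not_lt.mp hp
  have hab : ξm < ξp := hxab.1.trans hxab.2
  exact ⟨irrational_of_brjuno_ne_top (ne_top_of_le_ne_top ENNReal.ofReal_ne_top hm_le),
    irrational_of_brjuno_ne_top (ne_top_of_le_ne_top ENNReal.ofReal_ne_top hp_le),
    brjuno_eq_of_Ioo_subset_brjunoSuper hab hsub (.inl rfl) hm_le,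
    brjuno_eq_of_Ioo_subset_brjunoSuper hab hsub (.inr rfl) hp_le⟩

/-- the endpoints of a connected component of the superlevel set
`A_t = {x | B(x) > t}` are irrational and the Brjuno function takes the value `t` there. -/
theorem statement5 (t : ℝ) (ht : 0 ≤ t) (ξm ξp : ℝ)
    (hcomp : ∃ x ∈ brjunoSuper t,
      connectedComponentIn (brjunoSuper t) x = Set.Ioo ξm ξp) :
    Irrational ξm ∧ Irrational ξp ∧
      brjuno ξm = ENNReal.ofReal t ∧ brjuno ξp = ENNReal.ofReal t :=
  statement5_general t ξm ξp hcomp
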